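/- Let X_1,…,X_S be i.i.d. real-valued random variables with common law P, let p ∈ (0,1), and let X^{(1)} ≤ … ≤ X^{(S)} be the order statistics. Suppose s ∈ {1,…,S} and δ ∈ (0,1) satisfy Σ_{j=s}^{S} C(S,j) (1−p)^{j} p^{S−j} ≤ δ and S − s + 1 < s. Then, with probability at least 1 − 2δ over the sample, both P({ x : x ≤ X^{(s)} }) ≥ 1 − p and P({ x : x ≥ X^{(S−s+1)} }) ≥ 1 − p hold simultaneously, and consequently P({ x : X^{(S−s+1)} ≤ x ≤ X^{(s)} }) ≥ 1 − 2p. -/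

import Mathlib

/-! Take `q` with `P (-∞, q) ≤ 1 - p ≤ P (-∞, q]` and `q'` with
`P (q', ∞) ≤ 1 - p ≤ P [q', ∞)`. If `X^(s) < q`, at least `s` sample points lie in `(-∞, q)`.
The number of sample points in a set `E` is binomial with parameter `P E ≤ 1 - p`, and binomial
upper tails increase with the parameter, so this happens with probability at most `δ`;
symmetrically for `X^(S-s+1) > q'`. Off these two events both one-sided bounds hold, and the
two-sided one follows from `P (A ∩ B) ≥ P A + P B - 1`. -/

open MeasureTheory

/-- The `k`-th order statistic (1-indexed, `k ∈ {1,…,S}`) of the tuple `X`: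
the `k`-th smallest value among `X 0, …, X (S-1)`, counted with multiplicity. -/
noncomputable def orderStat {S : ℕ} (X : Fin S → ℝ) (k : ℕ) : ℝ :=
  if h : k - 1 < S then X (Tuple.sort X ⟨k - 1, h⟩) else 0

open Set ProbabilityTheory
open scoped ENNReal Finset

noncomputable def binomialTail (n s : ℕ) (a : ℝ≥0∞) : ℝ≥0∞ :=
  ∑ j ∈ Finset.Icc s n, n.choose j * a ^ j * (1 - a) ^ (n - j)

lemma binomialTail_ofReal (n s : ℕ) {a : ℝ} (ha0 : 0 ≤ a) (ha1 : a ≤ 1) :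
    binomialTail n s (ENNReal.ofReal a) =
      ENNReal.ofReal (∑ j ∈ Finset.Icc s n, n.choose j * a ^ j * (1 - a) ^ (n - j)) := by
  rw [ENNReal.ofReal_sum_of_nonneg fun j _ => by have := sub_nonneg.2 ha1; positivity]
  refine Finset.sum_congr rfl fun j _ => ?_
  rw [← ENNReal.ofReal_one, ← ENNReal.ofReal_sub _ ha0, ENNReal.ofReal_mul (by positivity),
    ENNReal.ofReal_mul (by positivity), ENNReal.ofReal_pow ha0,
    ENNReal.ofReal_pow (sub_nonneg.2 ha1), ENNReal.ofReal_natCast]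

section Counting

variable {ι α : Type*} [Fintype ι]

open Classical in
noncomputable def countIn (X : ι → α) (E : Set α) : ℕ :=
  #{i | X i ∈ E}

lemma countIn_mono (X : ι → α) {E F : Set α} (h : E ⊆ F) : countIn X E ≤ countIn X F := by
  classical
  exact Finset.card_le_card (Finset.monotone_filter_right _ fun _ _ hi => h hi)

lemma countIn_le_card (X : ι → α) (E : Set α) : countIn X E ≤ Fintype.card ι := by
  classical
  exact Finset.card_filter_le _ _

open Classical in
lemma setOf_filter_mem_eq_pi (E : Set α) (T : Finset ι) :
    {X : ι → α | ({i | X i ∈ E} : Finset ι) = T} =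
      univ.pi fun i => if i ∈ T then E else Eᶜ := by
  ext X
  simp only [mem_ofPred_eq, mem_univ_pi, Finset.ext_iff, Finset.mem_filter, Finset.mem_univ,
    true_and]
  refine forall_congr' fun i => ?_
  split_ifs with hi <;> simp [hi]

variable [MeasurableSpace α]

lemma measurable_countIn {E : Set α} (hE : MeasurableSet E) :
    Measurable fun X : ι → α => countIn X E := by
  classical
  simp_rw [countIn, Finset.card_filter]
  exact Finset.measurable_sum _ fun i _ =>
    Measurable.ite (measurable_pi_apply i hE) measurable_const measurable_const

open Classical in
lemma measure_pi_filter_mem_eq (P : Measure α) [SigmaFinite P] (E : Set α) (T : Finset ι) :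
    Measure.pi (fun _ : ι => P) {X | ({i | X i ∈ E} : Finset ι) = T} =
      P E ^ #T * P Eᶜ ^ (Fintype.card ι - #T) := by
  rw [setOf_filter_mem_eq_pi, Measure.pi_pi]
  simp only [apply_ite P, Finset.prod_ite, Finset.prod_const, Finset.filter_mem_eq_inter,
    Finset.univ_inter]
  rw [← Finset.card_compl]
  congr 3
  ext i
  simp

lemma measure_pi_countIn_eq (P : Measure α) [SigmaFinite P] {E : Set α} (hE : MeasurableSet E)
    (j : ℕ) :
    Measure.pi (fun _ : ι => P) {X | countIn X E = j} =
      (Fintype.card ι).choose j * P E ^ j * P Eᶜ ^ (Fintype.card ι - j) := by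
  classical
  let hits : (ι → α) → Finset ι := fun X => {i | X i ∈ E}
  have hfiber : ∀ T, MeasurableSet (hits ⁻¹' {T}) := fun T => by
    simp only [hits, preimage, mem_singleton_iff]
    rw [setOf_filter_mem_eq_pi]
    exact MeasurableSet.univ_pi fun i => by split_ifs; exacts [hE, hE.compl]
  have hcount : {X | countIn X E = j} =
      hits ⁻¹' ((Finset.univ.powersetCard j : Finset (Finset ι)) : Set (Finset ι)) := by
    ext X
    simp [countIn, hits]
  rw [hcount, ← sum_measure_preimage_singleton _ fun T _ => hfiber T,
    Finset.sum_congr rfl fun T hT => ?_, Finset.sum_const, Finset.card_powersetCard,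
    Finset.card_univ, nsmul_eq_mul, mul_assoc]
  rw [(Finset.mem_powersetCard.1 hT).2.symm]
  exact measure_pi_filter_mem_eq P E T

lemma measure_pi_le_countIn (P : Measure α) [IsProbabilityMeasure P] {E : Set α}
    (hE : MeasurableSet E) (s : ℕ) :
    Measure.pi (fun _ : ι => P) {X | s ≤ countIn X E} =
      binomialTail (Fintype.card ι) s (P E) := by
  have hle : {X : ι → α | s ≤ countIn X E} =
      (countIn · E) ⁻¹' ((Finset.Icc s (Fintype.card ι) : Finset ℕ) : Set ℕ) := by
    ext X
    simp [countIn_le_card]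
  rw [hle, ← sum_measure_preimage_singleton _ fun j _ =>
    measurable_countIn hE (measurableSet_singleton j)]
  simp only [preimage, mem_singleton_iff, measure_pi_countIn_eq P hE, prob_compl_eq_one_sub hE]
  rfl

-- Coupling: `binomialTail n s c` is the probability that at least `s` of `n` independent uniform
-- points of `[0, 1]` land in `[0, c]`, which grows with `c`.
lemma binomialTail_mono {n s : ℕ} {a b : ℝ≥0∞} (hab : a ≤ b) (hb : b ≤ 1) :
    binomialTail n s a ≤ binomialTail n s b := by
  let u : ℝ≥0∞ → unitInterval := fun c => projIcc 0 1 zero_le_one c.toReal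
  have hu : ∀ c ≤ 1, volume (Iic (u c)) = c := fun c hc => by
    have hc' : c ≠ ∞ := ne_top_of_le_ne_top ENNReal.one_ne_top hc
    rw [unitInterval.volume_Iic, show u c = _ from projIcc_of_mem _ ⟨ENNReal.toReal_nonneg,
      ENNReal.toReal_le_of_le_ofReal zero_le_one (by rwa [ENNReal.ofReal_one])⟩,
      ENNReal.ofReal_toReal hc']
  have hab' : Iic (u a) ⊆ Iic (u b) := Iic_subset_Iic.2 <|
    monotone_projIcc _ (ENNReal.toReal_mono (ne_top_of_le_ne_top ENNReal.one_ne_top hb) hab)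
  rw [← hu a (hab.trans hb), ← hu b hb, ← Fintype.card_fin n,
    ← measure_pi_le_countIn volume measurableSet_Iic,
    ← measure_pi_le_countIn volume measurableSet_Iic]
  exact measure_mono fun X hX => hX.trans (countIn_mono X hab')

lemma measure_pi_le_countIn_le (P : Measure α) [IsProbabilityMeasure P]
    {E : Set α} (hE : MeasurableSet E) {p δ : ℝ} (hp0 : 0 ≤ p)
    (hp1 : p ≤ 1) (hPE : P E ≤ ENNReal.ofReal (1 - p)) {s : ℕ}
    (hbinom : ∑ j ∈ Finset.Icc s (Fintype.card ι),
      ((Fintype.card ι).choose j : ℝ) * (1 - p) ^ j * p ^ (Fintype.card ι - j) ≤ δ) :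
    Measure.pi (fun _ : ι => P) {X | s ≤ countIn X E} ≤ ENNReal.ofReal δ := by
  calc Measure.pi (fun _ : ι => P) {X | s ≤ countIn X E}
      = binomialTail (Fintype.card ι) s (P E) := measure_pi_le_countIn P hE s
    _ ≤ binomialTail (Fintype.card ι) s (ENNReal.ofReal (1 - p)) :=
      binomialTail_mono hPE (ENNReal.ofReal_le_one.2 (by linarith))
    _ ≤ ENNReal.ofReal δ := by
      rw [binomialTail_ofReal _ _ (by linarith) (by linarith), sub_sub_cancel]
      exact ENNReal.ofReal_le_ofReal hbinom

end Counting

lemma exists_measure_Iio_le_le_measure_Iic (P : Measure ℝ) [IsProbabilityMeasure P] {c : ℝ}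
    (hc0 : 0 < c) (hc1 : c < 1) :
    ∃ q, P (Iio q) ≤ ENNReal.ofReal c ∧ ENNReal.ofReal c ≤ P (Iic q) := by
  set F := cdf P
  set A := {x | c ≤ F x}
  have hA : A.Nonempty := ((tendsto_cdf_atTop P).eventually (eventually_ge_nhds hc1)).exists
  have hA_bdd : BddBelow A := by
    obtain ⟨x₀, hx₀⟩ := ((tendsto_cdf_atBot P).eventually (eventually_lt_nhds hc0)).exists
    exact ⟨x₀, fun x hx => le_of_not_gt fun hlt =>
      (hx.trans (monotone_cdf P hlt.le)).not_gt hx₀⟩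
  refine ⟨sInf A, ?_, ?_⟩
  · have hlt : ∀ x < sInf A, F x < c := fun x hx =>
      lt_of_not_ge fun h => (csInf_le hA_bdd h).not_gt hx
    rw [← measure_cdf P, F.measure_Iio (tendsto_cdf_atBot P), sub_zero]
    exact ENNReal.ofReal_le_ofReal <| le_of_tendsto ((monotone_cdf P).tendsto_leftLim _)
      (eventually_nhdsWithin_of_forall fun x hx => (hlt x hx).le)
  · rw [← ofReal_cdf]
    refine ENNReal.ofReal_le_ofReal <|
      ge_of_tendsto ((F.right_continuous _).mono Ioi_subset_Ici_self)
        (eventually_nhdsWithin_of_forall fun x hx => ?_)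
    obtain ⟨a, ha, hax⟩ := (csInf_lt_iff hA_bdd hA).1 hx
    exact ha.trans (monotone_cdf P hax.le)

lemma exists_measure_Ioi_le_le_measure_Ici (P : Measure ℝ) [IsProbabilityMeasure P] {c : ℝ}
    (hc0 : 0 < c) (hc1 : c < 1) :
    ∃ q, P (Ioi q) ≤ ENNReal.ofReal c ∧ ENNReal.ofReal c ≤ P (Ici q) := by
  have := Measure.isProbabilityMeasure_map (μ := P) measurable_neg.aemeasurable
  obtain ⟨q, hIio, hIic⟩ := exists_measure_Iio_le_le_measure_Iic (P.map Neg.neg) hc0 hc1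
  refine ⟨-q, ?_, ?_⟩
  · rwa [Measure.map_apply measurable_neg measurableSet_Iio, neg_preimage, neg_Iio] at hIio
  · rwa [Measure.map_apply measurable_neg measurableSet_Iic, neg_preimage, neg_Iic] at hIic

lemma IsLowerSet.le_countIn_of_orderStat_mem {E : Set ℝ} (hE : IsLowerSet E) {S : ℕ}
    (X : Fin S → ℝ) {k : ℕ} (hk : 1 ≤ k) (hkS : k ≤ S) (h : orderStat X k ∈ E) :
    k ≤ countIn X E := by
  classical
  have hlt : k - 1 < S := by omega
  rw [orderStat, dif_pos hlt] at h
  calc k = #(Finset.Iic (⟨k - 1, hlt⟩ : Fin S)) := by rw [Fin.card_Iic]; dsimp only; omega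
    _ ≤ countIn X E := Finset.card_le_card_of_injOn (Tuple.sort X)
      (fun j hj => by simpa using hE (Tuple.monotone_sort X (Finset.mem_Iic.1 hj)) h)
      (Tuple.sort X).injective.injOn

lemma IsUpperSet.le_countIn_of_orderStat_mem {E : Set ℝ} (hE : IsUpperSet E) {S : ℕ}
    (X : Fin S → ℝ) {k : ℕ} (hk : 1 ≤ k) (hkS : k ≤ S) (h : orderStat X k ∈ E) :
    S - k + 1 ≤ countIn X E := by
  classical
  have hlt : k - 1 < S := by omega
  rw [orderStat, dif_pos hlt] at h
  calc S - k + 1 = #(Finset.Ici (⟨k - 1, hlt⟩ : Fin S)) := by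
        rw [Fin.card_Ici]; dsimp only; omega
    _ ≤ countIn X E := Finset.card_le_card_of_injOn (Tuple.sort X)
      (fun j hj => by simpa using hE (Tuple.monotone_sort X (Finset.mem_Ici.1 hj)) h)
      (Tuple.sort X).injective.injOn

lemma ofReal_one_sub_add_le_measure_inter {Ω : Type*} [MeasurableSpace Ω] {μ : Measure Ω}
    [IsProbabilityMeasure μ] {s t : Set Ω} (ht : MeasurableSet t) {a b : ℝ}
    (hs : ENNReal.ofReal (1 - a) ≤ μ s) (ht' : ENNReal.ofReal (1 - b) ≤ μ t) :
    ENNReal.ofReal (1 - (a + b)) ≤ μ (s ∩ t) := by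
  rw [ENNReal.ofReal_le_iff_le_toReal (measure_ne_top _ _)] at hs ht' ⊢
  have hunion := measureReal_union_add_inter (μ := μ) (s := s) ht
  have hle : μ.real (s ∪ t) ≤ 1 := measureReal_le_one
  simp only [measureReal_def] at hunion hle
  linarith

lemma orderStat_coverage_of_countIn_lt (P : Measure ℝ) [IsProbabilityMeasure P] {S s : ℕ}
    (hs1 : 1 ≤ s) (hsS : s ≤ S) {X : Fin S → ℝ} {a q q' : ℝ}
    (hq : ENNReal.ofReal (1 - a) ≤ P (Iic q)) (hq' : ENNReal.ofReal (1 - a) ≤ P (Ici q'))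
    (hX : countIn X (Iio q) < s) (hX' : countIn X (Ioi q') < s) :
    ENNReal.ofReal (1 - a) ≤ P {x : ℝ | x ≤ orderStat X s} ∧
      ENNReal.ofReal (1 - a) ≤ P {x : ℝ | orderStat X (S - s + 1) ≤ x} ∧
      ENNReal.ofReal (1 - 2 * a) ≤
        P {x : ℝ | orderStat X (S - s + 1) ≤ x ∧ x ≤ orderStat X s} := by
  have hupper : q ≤ orderStat X s := not_lt.1 fun h =>
    hX.not_ge ((isLowerSet_Iio q).le_countIn_of_orderStat_mem X hs1 hsS h)
  have hlower : orderStat X (S - s + 1) ≤ q' := not_lt.1 fun h => by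
    have := (isUpperSet_Ioi q').le_countIn_of_orderStat_mem X (by omega) (by omega) h
    omega
  have hle : ENNReal.ofReal (1 - a) ≤ P (Iic (orderStat X s)) :=
    hq.trans (measure_mono (Iic_subset_Iic.2 hupper))
  have hge : ENNReal.ofReal (1 - a) ≤ P (Ici (orderStat X (S - s + 1))) :=
    hq'.trans (measure_mono (Ici_subset_Ici.2 hlower))
  refine ⟨hle, hge, ?_⟩
  rw [two_mul]
  exact ofReal_one_sub_add_le_measure_inter measurableSet_Iic hge hle

theorem orderStat_two_sided_quantile_coverage_general
    (S : ℕ) (P : Measure ℝ) [IsProbabilityMeasure P]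
    (p δ : ℝ) (hp : p ∈ Set.Ioo (0 : ℝ) 1) (hδ : δ ∈ Set.Ioo (0 : ℝ) 1)
    (s : ℕ) (hs1 : 1 ≤ s) (hsS : s ≤ S)
    (hbinom : ∑ j ∈ Finset.Icc s S,
        (S.choose j : ℝ) * (1 - p) ^ j * p ^ (S - j) ≤ δ) :
    ENNReal.ofReal (1 - 2 * δ) ≤
      (Measure.pi fun _ : Fin S => P)
        {X : Fin S → ℝ |
          ENNReal.ofReal (1 - p) ≤ P {x : ℝ | x ≤ orderStat X s} ∧
          ENNReal.ofReal (1 - p) ≤ P {x : ℝ | orderStat X (S - s + 1) ≤ x} ∧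
          ENNReal.ofReal (1 - 2 * p) ≤
            P {x : ℝ | orderStat X (S - s + 1) ≤ x ∧ x ≤ orderStat X s}} := by
  obtain ⟨hp0, hp1⟩ := hp
  obtain ⟨q, hq_Iio, hq_Iic⟩ :=
    exists_measure_Iio_le_le_measure_Iic P (c := 1 - p) (by linarith) (by linarith)
  obtain ⟨q', hq'_Ioi, hq'_Ici⟩ :=
    exists_measure_Ioi_le_le_measure_Ici P (c := 1 - p) (by linarith) (by linarith)
  rw [← Fintype.card_fin S] at hbinom
  set bad := {X : Fin S → ℝ | s ≤ countIn X (Iio q)} ∪ {X | s ≤ countIn X (Ioi q')}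
  have hbad : Measure.pi (fun _ : Fin S => P) bad ≤ ENNReal.ofReal (2 * δ) := by
    rw [two_mul, ENNReal.ofReal_add hδ.1.le hδ.1.le]
    exact (measure_union_le _ _).trans <| add_le_add
      (measure_pi_le_countIn_le P measurableSet_Iio hp0.le hp1.le hq_Iio hbinom)
      (measure_pi_le_countIn_le P measurableSet_Ioi hp0.le hp1.le hq'_Ioi hbinom)
  have hbad_meas : MeasurableSet bad :=
    (measurable_countIn measurableSet_Iio measurableSet_Ici).union
      (measurable_countIn measurableSet_Ioi measurableSet_Ici)
  calc ENNReal.ofReal (1 - 2 * δ) = 1 - ENNReal.ofReal (2 * δ) := by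
        rw [ENNReal.ofReal_sub _ (by linarith [hδ.1]), ENNReal.ofReal_one]
    _ ≤ 1 - Measure.pi (fun _ : Fin S => P) bad := tsub_le_tsub_left hbad 1
    _ = Measure.pi (fun _ : Fin S => P) badᶜ := (prob_compl_eq_one_sub hbad_meas).symm
    _ ≤ _ := measure_mono fun X hX => by
      simp only [bad, mem_compl_iff, mem_union, mem_ofPred_eq, not_or, not_le] at hX
      exact orderStat_coverage_of_countIn_lt P hs1 hsS hq_Iic hq'_Ici hX.1 hX.2

/-- **Two-sided order-statistic quantile coverage.**
Let `X_1,…,X_S` be i.i.d. with law `P`, `p ∈ (0,1)`, and suppose `s ∈ {1,…,S}`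
and `δ ∈ (0,1)` satisfy `∑_{j=s}^{S} C(S,j) (1-p)^j p^{S-j} ≤ δ` and
`S - s + 1 < s`.  Then, with probability at least `1 - 2δ` over the sample
(w.r.t. `P^⊗S`), both `P({x : x ≤ X^{(s)}}) ≥ 1 - p` and
`P({x : X^{(S-s+1)} ≤ x}) ≥ 1 - p` hold simultaneously, and consequently
`P({x : X^{(S-s+1)} ≤ x ≤ X^{(s)}}) ≥ 1 - 2p`. -/
theorem orderStat_two_sided_quantile_coverage
    (S : ℕ) (hS : 0 < S) (P : Measure ℝ) [IsProbabilityMeasure P]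
    (p δ : ℝ) (hp : p ∈ Set.Ioo (0 : ℝ) 1) (hδ : δ ∈ Set.Ioo (0 : ℝ) 1)
    (s : ℕ) (hs1 : 1 ≤ s) (hsS : s ≤ S)
    (hbinom : ∑ j ∈ Finset.Icc s S,
        (S.choose j : ℝ) * (1 - p) ^ j * p ^ (S - j) ≤ δ)
    (hs2 : S - s + 1 < s) :
    ENNReal.ofReal (1 - 2 * δ) ≤
      (Measure.pi fun _ : Fin S => P)
        {X : Fin S → ℝ |
          ENNReal.ofReal (1 - p) ≤ P {x : ℝ | x ≤ orderStat X s} ∧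
          ENNReal.ofReal (1 - p) ≤ P {x : ℝ | orderStat X (S - s + 1) ≤ x} ∧
          ENNReal.ofReal (1 - 2 * p) ≤
            P {x : ℝ | orderStat X (S - s + 1) ≤ x ∧ x ≤ orderStat X s}} :=
  orderStat_two_sided_quantile_coverage_general S P p δ hp hδ s hs1 hsS hbinom
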